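/- Let F : EuclideanSpace ℝ (Fin E) → ℝ be differentiable with L-Lipschitz gradient (L > 0), and let S : Fin n → Finset (Fin E) be a set system (each S i nonempty, every coordinate in exactly two sets) with N_max the maximum cardinality of the S i. Then for every λ, the expected progress of the set-wise uniform coordinate descent step satisfies (1/n)·Σ_{i : Fin n} (1/|S i|)·Σ_{ℓ ∈ S i} F(λ − (1/L)·(∇F(λ))_ℓ • e_ℓ) ≤ F(λ) − (1/(L·n·N_max))·‖∇F(λ)‖². -/

import Mathlib

/-!
By the descent lemma, a step of length `1 / L` along coordinate `ℓ` decreases `F` by at least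
`(∇F λ)_ℓ² / (2L)`. Averaging over `ℓ ∈ S i` and using `|S i| ≤ N_max` bounds the progress of
set `i` by `∑_{ℓ ∈ S i} (∇F λ)_ℓ² / (2 L N_max)`; summing over `i` counts every coordinate
exactly twice, which turns the sum into `‖∇F λ‖² / (L N_max)`.
-/

open RealInnerProductSpace Finset NNReal

section Descent

variable {H : Type*} [NormedAddCommGroup H] [InnerProductSpace ℝ H] [CompleteSpace H]
  {F : H → ℝ}

theorem apply_add_le_of_lipschitzWith_gradient {K : ℝ≥0} (hF : Differentiable ℝ F)
    (hlip : LipschitzWith K (gradient F)) (x v : H) :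
    F (x + v) ≤ F x + ⟪gradient F x, v⟫ + K / 2 * ‖v‖ ^ 2 := by
  -- `φ t = F (x + t v) - t ⟪∇F x, v⟫ - K ‖v‖² t² / 2` is antitone on `[0, ∞)`.
  set φ : ℝ → ℝ := fun t => F (x + t • v) - t * ⟪gradient F x, v⟫ - K / 2 * ‖v‖ ^ 2 * t ^ 2
  have hφ' : ∀ t, HasDerivAt φ
      (⟪gradient F (x + t • v) - gradient F x, v⟫ - K * ‖v‖ ^ 2 * t) t := by
    intro t
    have hline : HasDerivAt (fun s : ℝ => x + s • v) v t := by
      simpa using ((hasDerivAt_id t).smul_const v).const_add x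
    have hF' : HasDerivAt (fun s : ℝ => F (x + s • v)) ⟪gradient F (x + t • v), v⟫ t :=
      (hasGradientAt_iff_hasFDerivAt.mp (hF _).hasGradientAt).comp_hasDerivAt t hline
    refine ((hF'.sub ((hasDerivAt_id' t).mul_const ⟪gradient F x, v⟫)).sub
      ((hasDerivAt_pow 2 t).const_mul (K / 2 * ‖v‖ ^ 2))).congr_deriv ?_
    rw [inner_sub_left]
    ring
  have hanti : AntitoneOn φ (Set.Ici 0) := by
    refine antitoneOn_of_hasDerivWithinAt_nonpos (convex_Ici 0)
      (fun t _ => (hφ' t).continuousAt.continuousWithinAt)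
      (fun t _ => (hφ' t).hasDerivWithinAt) fun t ht => ?_
    rw [interior_Ici, Set.mem_Ioi] at ht
    have hdist : ‖gradient F (x + t • v) - gradient F x‖ ≤ K * (t * ‖v‖) := by
      simpa [← dist_eq_norm, norm_smul, abs_of_pos ht] using hlip.dist_le_mul (x + t • v) x
    rw [sub_nonpos]
    calc ⟪gradient F (x + t • v) - gradient F x, v⟫
        ≤ ‖gradient F (x + t • v) - gradient F x‖ * ‖v‖ := real_inner_le_norm _ _
      _ ≤ K * (t * ‖v‖) * ‖v‖ := by gcongr
      _ = K * ‖v‖ ^ 2 * t := by ring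
  have h01 : φ 1 ≤ φ 0 := hanti (Set.mem_Ici.2 le_rfl) (Set.mem_Ici.2 zero_le_one) zero_le_one
  have h0 : φ 0 = F x := by simp [φ]
  have h1 : φ 1 = F (x + v) - ⟪gradient F x, v⟫ - K / 2 * ‖v‖ ^ 2 := by simp [φ]
  linarith

theorem apply_sub_inner_gradient_smul_le {L : ℝ} (hL : 0 < L) (hF : Differentiable ℝ F)
    (hlip : LipschitzWith L.toNNReal (gradient F)) (x u : H) (hu : ‖u‖ = 1) :
    F (x - ((1 / L) * ⟪gradient F x, u⟫) • u) ≤ F x - ⟪gradient F x, u⟫ ^ 2 / (2 * L) := by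
  have h :=
    apply_add_le_of_lipschitzWith_gradient hF hlip x (-(((1 / L) * ⟪gradient F x, u⟫) • u))
  rw [← sub_eq_add_neg, inner_neg_right, real_inner_smul_right, norm_neg, norm_smul, hu,
    Real.coe_toNNReal _ hL.le, Real.norm_eq_abs, mul_one, sq_abs] at h
  refine h.trans_eq ?_
  field_simp
  ring

end Descent

theorem EuclideanSpace.apply_sub_gradient_smul_single_le {ι : Type*} [Fintype ι] [DecidableEq ι]
    {F : EuclideanSpace ℝ ι → ℝ} {L : ℝ} (hL : 0 < L) (hF : Differentiable ℝ F)
    (hlip : LipschitzWith L.toNNReal (gradient F)) (x : EuclideanSpace ℝ ι) (ℓ : ι) :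
    F (x - ((1 / L) * gradient F x ℓ) • EuclideanSpace.single ℓ (1 : ℝ)) ≤
      F x - gradient F x ℓ ^ 2 / (2 * L) := by
  have h := apply_sub_inner_gradient_smul_le hL hF hlip x (EuclideanSpace.single ℓ (1 : ℝ))
    (by simp)
  rwa [EuclideanSpace.inner_single_right, one_mul, conj_trivial] at h

theorem Finset.sum_sum_mem_eq_sum_card_smul {ι κ M : Type*} [Fintype ι] [Fintype κ]
    [DecidableEq κ] [AddCommMonoid M] (S : ι → Finset κ) (f : κ → M) :
    ∑ i, ∑ ℓ ∈ S i, f ℓ = ∑ ℓ, #{i | ℓ ∈ S i} • f ℓ := by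
  simp_rw [← sum_const]
  exact sum_comm' fun i ℓ => by simp

theorem one_div_card_mul_sum_le_sub {κ : Type*} {s : Finset κ} (hs : s.Nonempty) {N : ℝ}
    (hN : (#s : ℝ) ≤ N) {f d : κ → ℝ} {c : ℝ} (hd : ∀ ℓ ∈ s, 0 ≤ d ℓ)
    (hf : ∀ ℓ ∈ s, f ℓ ≤ c - d ℓ) :
    1 / (#s : ℝ) * ∑ ℓ ∈ s, f ℓ ≤ c - 1 / N * ∑ ℓ ∈ s, d ℓ := by
  have hs' : (0 : ℝ) < #s := by exact_mod_cast hs.card_pos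
  calc 1 / (#s : ℝ) * ∑ ℓ ∈ s, f ℓ ≤ 1 / (#s : ℝ) * ∑ ℓ ∈ s, (c - d ℓ) := by
        gcongr with ℓ hℓ; exact hf ℓ hℓ
    _ = c - 1 / (#s : ℝ) * ∑ ℓ ∈ s, d ℓ := by
        rw [sum_sub_distrib, sum_const, nsmul_eq_mul]; field_simp
    _ ≤ c - 1 / N * ∑ ℓ ∈ s, d ℓ := by
        gcongr
        exact sum_nonneg hd

/-- Expected progress of one step of set-wise uniform coordinate descent
(SU-CD) on an `L`-smooth function. -/
theorem stmt5 (n E : ℕ) (hn : 0 < n)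
    (F : EuclideanSpace ℝ (Fin E) → ℝ) (L : ℝ) (hL : 0 < L)
    (hdiff : Differentiable ℝ F)
    (hlip : LipschitzWith L.toNNReal (gradient F))
    (S : Fin n → Finset (Fin E))
    (hne : ∀ i, (S i).Nonempty)
    (htwo : ∀ ℓ : Fin E, (Finset.univ.filter (fun i => ℓ ∈ S i)).card = 2)
    (Nmax : ℕ) (hNmax : IsGreatest (Set.range fun i => (S i).card) Nmax)
    (lam : EuclideanSpace ℝ (Fin E)) :
    (1 / (n : ℝ)) * ∑ i, (1 / ((S i).card : ℝ)) *
        ∑ ℓ ∈ S i, F (lam - ((1 / L) * gradient F lam ℓ) • EuclideanSpace.single ℓ (1 : ℝ)) ≤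
      F lam - (1 / (L * n * Nmax)) * ‖gradient F lam‖ ^ 2 := by
  set g := gradient F lam
  have hset (i : Fin n) : 1 / ((S i).card : ℝ) *
      ∑ ℓ ∈ S i, F (lam - ((1 / L) * g ℓ) • EuclideanSpace.single ℓ (1 : ℝ)) ≤
        F lam - 1 / (Nmax : ℝ) * ∑ ℓ ∈ S i, g ℓ ^ 2 / (2 * L) :=
    one_div_card_mul_sum_le_sub (hne i) (by exact_mod_cast hNmax.2 ⟨i, rfl⟩)
      (fun ℓ _ => by positivity)
      fun ℓ _ => EuclideanSpace.apply_sub_gradient_smul_single_le hL hdiff hlip lam ℓ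
  have hcount : ∑ i, ∑ ℓ ∈ S i, g ℓ ^ 2 / (2 * L) = ‖g‖ ^ 2 / L := by
    rw [sum_sum_mem_eq_sum_card_smul, EuclideanSpace.real_norm_sq_eq, sum_div]
    refine sum_congr rfl fun ℓ _ => ?_
    rw [htwo ℓ, two_nsmul]
    field_simp
    ring
  have hNmax_pos : (0 : ℝ) < Nmax := by
    obtain ⟨i, hi⟩ := hNmax.1
    rw [← hi]
    exact_mod_cast (hne i).card_pos
  have hn' : (0 : ℝ) < n := by exact_mod_cast hn
  calc _ ≤ 1 / (n : ℝ) * ∑ i, (F lam - 1 / (Nmax : ℝ) * ∑ ℓ ∈ S i, g ℓ ^ 2 / (2 * L)) := by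
        gcongr with i; exact hset i
    _ = F lam - 1 / (L * n * Nmax) * ‖g‖ ^ 2 := by
        rw [sum_sub_distrib, ← mul_sum, hcount, sum_const, card_univ, Fintype.card_fin,
          nsmul_eq_mul]
        field_simp
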